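/- Define a(n) by ∑_{n≥1} a(n) qⁿ = q·∏_{k≥1} (1−q^k)³(1−q^{7k})³. Then for all k ≥ 0 and n ≥ 1, a(7^k n) ≡ 0 (mod 7^k). -/

import Mathlib

/-!
Jacobi's identity `∏ⱼ (1 - qʲ)³ = ∑ₖ (-1)ᵏ (2k + 1) q^{T k}`, `T k = k (k + 1) / 2`, is proved in a
finite form. The coefficient of `zⁱ` in `(z - 1) ∏_{j=1}^n (1 - qʲ z)(z - qʲ)` is
`± q^{T (n - i)} [2n+1 choose i]_q` (read `T (i - n - 1)` for `i > n`), so differentiating at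
`z = 1` gives `(q;q)ₙ² = ∑ₖ (-1)ᵏ (2k + 1) q^{T k} [2n+1 choose n-k]_q`. Since
`(q;q)ₙ [2n+1 choose n-k]_q ≡ 1 mod q^{n-k+1}`, the cube `(q;q)ₙ³` agrees with Jacobi's series below
`q^{n+1}`, and `a (n + 1) = ∑_{i + 7j = n} c i * c j` with `c` the coefficients of that series.

A triangular number `T i` is `≡ 6 mod 7` only when `i = 7j + 3`, and then `T i = 49 T j + 6` while
`(-1)ⁱ (2i + 1) = -7 (-1)ʲ (2j + 1)`. Hence `a (7m) = -7 a m`, so `a (7ᵏ n) = (-7)ᵏ a n`.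
-/

open Finset

def triangle (k : ℕ) : ℕ := k * (k + 1) / 2

theorem two_mul_triangle (k : ℕ) : 2 * triangle k = k * (k + 1) :=
  Nat.mul_div_cancel' (Nat.even_mul_succ_self k).two_dvd

theorem triangle_zero : triangle 0 = 0 := rfl

theorem triangle_succ (k : ℕ) : triangle (k + 1) = triangle k + (k + 1) := by
  have h₁ := two_mul_triangle k
  have h₂ := two_mul_triangle (k + 1)
  nlinarith

theorem le_triangle (k : ℕ) : k ≤ triangle k := by
  have := two_mul_triangle k
  nlinarith

theorem triangle_strictMono : StrictMono triangle :=
  strictMono_nat_of_lt_succ fun k => by rw [triangle_succ]; omega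

theorem triangle_seven_mul_add_three (j : ℕ) : triangle (7 * j + 3) = 49 * triangle j + 6 := by
  have h₁ := two_mul_triangle j
  have h₂ := two_mul_triangle (7 * j + 3)
  nlinarith

theorem mod_seven_of_triangle_mod_seven {i : ℕ} (h : triangle i % 7 = 6) : i % 7 = 3 := by
  have h₂ : i * (i + 1) % 7 = 5 := by rw [← two_mul_triangle, Nat.mul_mod, h]
  rw [Nat.mul_mod, Nat.add_mod] at h₂
  have : i % 7 < 7 := Nat.mod_lt _ (by norm_num)
  interval_cases i % 7 <;> simp_all

/-- The coefficient of `qᵃ` in `∏ⱼ (1 - qʲ)³`, written through Jacobi's identity. -/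
def eulerCubeCoeff (a : ℕ) : ℤ :=
  ∑ k ∈ range (a + 1), if triangle k = a then (-1) ^ k * (2 * k + 1) else 0

theorem eulerCubeCoeff_eq_sum_range {a n : ℕ} (h : a ≤ n) :
    eulerCubeCoeff a =
      ∑ k ∈ range (n + 1), if triangle k = a then (-1) ^ k * (2 * k + 1 : ℤ) else 0 :=
  sum_subset (range_subset_range.mpr (by omega)) fun k _ hk =>
    if_neg fun hka => hk (mem_range.mpr (by have := le_triangle k; omega))

theorem eulerCubeCoeff_triangle (k : ℕ) : eulerCubeCoeff (triangle k) = (-1) ^ k * (2 * k + 1) := by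
  rw [eulerCubeCoeff, sum_eq_single k (fun j _ hj => if_neg (triangle_strictMono.injective.ne hj))
    (fun hk => absurd (mem_range.mpr (Nat.lt_succ_of_le (le_triangle k))) hk), if_pos rfl]

theorem eulerCubeCoeff_eq_zero {a : ℕ} (h : ∀ k, triangle k ≠ a) : eulerCubeCoeff a = 0 :=
  sum_eq_zero fun k _ => if_neg (h k)

theorem eulerCubeCoeff_seven_mul_add_six (m : ℕ) :
    eulerCubeCoeff (7 * m + 6) = -7 * if 7 ∣ m then eulerCubeCoeff (m / 7) else 0 := by
  by_cases h : ∃ i, triangle i = 7 * m + 6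
  · obtain ⟨i, hi⟩ := h
    obtain ⟨j, rfl⟩ : ∃ j, i = 7 * j + 3 :=
      ⟨i / 7, by have := mod_seven_of_triangle_mod_seven (by omega : triangle i % 7 = 6); omega⟩
    rw [triangle_seven_mul_add_three] at hi
    obtain rfl : m = 7 * triangle j := by omega
    have hT : 7 * (7 * triangle j) + 6 = triangle (7 * j + 3) := by
      rw [triangle_seven_mul_add_three]; ring
    rw [if_pos (dvd_mul_right 7 _), Nat.mul_div_cancel_left _ (by norm_num), hT,
      eulerCubeCoeff_triangle, eulerCubeCoeff_triangle, pow_add, pow_mul]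
    push_cast
    ring
  · simp only [not_exists] at h
    rw [eulerCubeCoeff_eq_zero h]
    split_ifs with h7
    · obtain ⟨c, rfl⟩ := h7
      rw [Nat.mul_div_cancel_left _ (by norm_num), eulerCubeCoeff_eq_zero, mul_zero]
      intro j hj
      exact h (7 * j + 3) (by rw [triangle_seven_mul_add_three, hj]; ring)
    · simp

theorem sum_antidiagonal_mul_add {M : Type*} [AddCommMonoid M] {d r : ℕ} (hr : r < d) (n : ℕ)
    (f : ℕ × ℕ → M) (hf : ∀ x : ℕ × ℕ, ¬ d ∣ x.2 → f x = 0) :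
    ∑ x ∈ antidiagonal (d * n + r), f x = ∑ x ∈ antidiagonal n, f (d * x.1 + r, d * x.2) := by
  have hd : 0 < d := by omega
  rw [← sum_image (g := fun x : ℕ × ℕ => (d * x.1 + r, d * x.2)) fun x _ y _ hxy => by
    simp only [Prod.mk.injEq, add_left_inj, Nat.mul_left_cancel_iff hd] at hxy
    exact Prod.ext hxy.1 hxy.2]
  refine (sum_subset (fun y hy => ?_) fun y hy hy' => hf y fun ⟨b, hb⟩ => hy' ?_).symm
  · obtain ⟨x, hx, rfl⟩ := mem_image.mp hy
    rw [HasAntidiagonal.mem_antidiagonal] at hx ⊢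
    rw [← hx]
    ring
  · rw [HasAntidiagonal.mem_antidiagonal] at hy
    have hb' : b ≤ n := by
      by_contra hbn
      have : d * (n + 1) ≤ d * b := Nat.mul_le_mul_left d (by omega)
      rw [mul_add] at this
      omega
    refine mem_image.mpr ⟨(n - b, b), HasAntidiagonal.mem_antidiagonal.mpr (by omega), ?_⟩
    ext
    · have := Nat.mul_le_mul_left d hb'
      simp only [Nat.mul_sub]
      omega
    · exact hb.symm

/-- The coefficient `a (n + 1)` of `η(τ)³η(7τ)³`. -/
def etaProductCoeff (n : ℕ) : ℤ :=
  ∑ x ∈ antidiagonal n, eulerCubeCoeff x.1 * if 7 ∣ x.2 then eulerCubeCoeff (x.2 / 7) else 0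

theorem etaProductCoeff_seven_mul_add_six (n : ℕ) :
    etaProductCoeff (7 * n + 6) = -7 * etaProductCoeff n := by
  rw [etaProductCoeff, sum_antidiagonal_mul_add (by norm_num) n _ fun x hx => by simp [hx],
    etaProductCoeff, mul_sum, ← Nat.sum_antidiagonal_swap]
  refine sum_congr rfl fun x _ => ?_
  simp only [eulerCubeCoeff_seven_mul_add_six, dvd_mul_right, if_true,
    Nat.mul_div_cancel_left _ (by norm_num : 0 < 7), Prod.fst_swap, Prod.snd_swap]
  ring

theorem apply_pow_mul_of_apply_mul {M : Type*} [Monoid M] (a : ℕ → M) {p : ℕ} (hp : 0 < p) {c : M}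
    (h : ∀ m, 0 < m → a (p * m) = c * a m) (k : ℕ) {n : ℕ} (hn : 0 < n) :
    a (p ^ k * n) = c ^ k * a n := by
  induction k with
  | zero => simp
  | succ k ih => rw [pow_succ', mul_assoc, h _ (by positivity), ih, pow_succ', mul_assoc]

section GaussBinom

variable {R : Type*} [CommRing R] (q : R)

def qPochhammer (n : ℕ) : R := ∏ j ∈ Icc 1 n, (1 - q ^ j)

theorem qPochhammer_zero : qPochhammer q 0 = 1 := rfl

theorem qPochhammer_succ (n : ℕ) : qPochhammer q (n + 1) = qPochhammer q n * (1 - q ^ (n + 1)) :=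
  prod_Icc_succ_top (by omega) _

theorem qPochhammer_eq_mul_prod_Ioc {r a : ℕ} (h : r ≤ a) :
    qPochhammer q a = qPochhammer q r * ∏ j ∈ Ioc r a, (1 - q ^ j) := by
  simp only [qPochhammer, show ∀ n, Icc 1 n = Ioc 0 n from Icc_add_one_left_eq_Ioc 0]
  exact (prod_Ioc_consecutive _ r.zero_le h).symm

def gaussBinom : ℕ → ℕ → R
  | _, 0 => 1
  | 0, _ + 1 => 0
  | m + 1, r + 1 => gaussBinom m r + q ^ (r + 1) * gaussBinom m (r + 1)

@[simp] theorem gaussBinom_zero_right (m : ℕ) : gaussBinom q m 0 = 1 := by cases m <;> rfl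

@[simp] theorem gaussBinom_zero_succ (r : ℕ) : gaussBinom q 0 (r + 1) = 0 := rfl

theorem gaussBinom_succ_succ (m r : ℕ) :
    gaussBinom q (m + 1) (r + 1) = gaussBinom q m r + q ^ (r + 1) * gaussBinom q m (r + 1) := rfl

theorem gaussBinom_eq_zero_of_lt {m r : ℕ} (h : m < r) : gaussBinom q m r = 0 := by
  induction m generalizing r with
  | zero => obtain ⟨r, rfl⟩ := Nat.exists_eq_add_one_of_ne_zero h.ne'; rfl
  | succ m ih =>
    obtain ⟨r, rfl⟩ := Nat.exists_eq_add_one_of_ne_zero (by omega : r ≠ 0)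
    rw [gaussBinom_succ_succ, ih (by omega), ih (by omega), mul_zero, add_zero]

@[simp] theorem gaussBinom_self (m : ℕ) : gaussBinom q m m = 1 := by
  induction m with
  | zero => rfl
  | succ m ih => rw [gaussBinom_succ_succ, ih, gaussBinom_eq_zero_of_lt q m.lt_succ_self, mul_zero,
      add_zero]

/-- The truncated `m - r` is harmless: `gaussBinom q m r = 0` for `m < r`. -/
theorem gaussBinom_succ_succ' (m r : ℕ) :
    gaussBinom q (m + 1) (r + 1) = q ^ (m - r) * gaussBinom q m r + gaussBinom q m (r + 1) := by
  induction m generalizing r with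
  | zero => cases r <;> simp [gaussBinom_succ_succ]
  | succ m ih =>
    rcases r with _ | r
    · have := ih 0
      simp only [gaussBinom_succ_succ, gaussBinom_zero_right, Nat.sub_zero, zero_add, pow_one,
        mul_one] at this ⊢
      linear_combination q * this
    · rcases le_or_gt (r + 1) m with h | h
      · have hp₁ : q ^ (r + 1) * q ^ (m - r) = q ^ (m + 1) := by rw [← pow_add]; congr 1; omega
        have hp₂ : q ^ (r + 2) * q ^ (m - (r + 1)) = q ^ (m + 1) := by
          rw [← pow_add]; congr 1; omega
        rw [show m + 1 - (r + 1) = m - r by omega]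
        linear_combination gaussBinom_succ_succ q (m + 1) (r + 1) -
          q ^ (m - r) * gaussBinom_succ_succ q m r - gaussBinom_succ_succ q m (r + 1) + ih r +
          q ^ (r + 2) * ih (r + 1) + gaussBinom q m (r + 1) * (hp₂ - hp₁)
      · obtain rfl | hr := eq_or_lt_of_le (show m ≤ r by omega)
        · simp [gaussBinom_eq_zero_of_lt q (Nat.lt_succ_self _)]
        · simp [gaussBinom_eq_zero_of_lt q (show m + 1 < r + 1 by omega),
            gaussBinom_eq_zero_of_lt q (show m + 1 < r + 2 by omega),
            gaussBinom_eq_zero_of_lt q (show m + 2 < r + 2 by omega)]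

theorem gaussBinom_symm_add (r s : ℕ) : gaussBinom q (r + s) r = gaussBinom q (r + s) s := by
  induction r, s using Nat.pincerRecursion with
  | Ha0 r => simp
  | H0b s => simp
  | H r s ih₁ ih₂ =>
    simp only [Nat.succ_eq_add_one, show r + (s + 1) = r + s + 1 by ring,
      show r + 1 + s = r + s + 1 by ring] at ih₁ ih₂ ⊢
    rw [show r + 1 + (s + 1) = r + s + 1 + 1 by ring, gaussBinom_succ_succ q (r + s + 1) r,
      gaussBinom_succ_succ' q (r + s + 1) s, ih₁, ih₂, show r + s + 1 - s = r + 1 by omega,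
      add_comm]

theorem gaussBinom_add_two_add_two (m r : ℕ) :
    gaussBinom q (m + 2) (r + 2) = q ^ (r + 2) * gaussBinom q m (r + 2) +
      (1 + q ^ (m + 1)) * gaussBinom q m (r + 1) + q ^ (m - r) * gaussBinom q m r := by
  have key : q ^ (r + 2) * q ^ (m - (r + 1)) * gaussBinom q m (r + 1) =
      q ^ (m + 1) * gaussBinom q m (r + 1) := by
    rcases le_or_gt (r + 1) m with h | h
    · rw [← pow_add]; congr 2; omega
    · simp [gaussBinom_eq_zero_of_lt q h]
  rw [gaussBinom_succ_succ q (m + 1) (r + 1), gaussBinom_succ_succ', gaussBinom_succ_succ']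
  linear_combination key

theorem gaussBinom_mul_qPochhammer (r s : ℕ) :
    gaussBinom q (r + s) r * qPochhammer q r * qPochhammer q s = qPochhammer q (r + s) := by
  induction r, s using Nat.pincerRecursion with
  | Ha0 r => simp [qPochhammer_zero]
  | H0b s => simp [qPochhammer_zero]
  | H r s ih₁ ih₂ =>
    simp only [Nat.succ_eq_add_one, show r + (s + 1) = r + s + 1 by ring,
      show r + 1 + s = r + s + 1 by ring] at ih₁ ih₂ ⊢
    rw [qPochhammer_succ q s] at ih₁
    rw [show r + 1 + (s + 1) = r + s + 1 + 1 by ring, gaussBinom_succ_succ, qPochhammer_succ q r,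
      qPochhammer_succ q s, qPochhammer_succ q (r + s + 1)]
    rw [qPochhammer_succ q r] at ih₂
    linear_combination (1 - q ^ (r + 1)) * ih₁ + q ^ (r + 1) * (1 - q ^ (s + 1)) * ih₂

end GaussBinom

section JacobiTripleProduct

open Polynomial

variable {R : Type*} [CommRing R] (q : R)

theorem eval_one_derivative_eq_sum_range (p : R[X]) {N : ℕ} (h : p.natDegree < N) :
    (derivative p).eval 1 = ∑ i ∈ range N, p.coeff i * i := by
  simp only [derivative_eval, one_pow, mul_one]
  exact sum_over_range' p (by simp) N h

noncomputable def jacobiPoly (n : ℕ) : R[X] :=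
  (X - 1) * ∏ j ∈ Icc 1 n, ((1 - C (q ^ j) * X) * (X - C (q ^ j)))

theorem jacobiPoly_succ (n : ℕ) :
    jacobiPoly q (n + 1) =
      jacobiPoly q n * ((1 - C (q ^ (n + 1)) * X) * (X - C (q ^ (n + 1)))) := by
  rw [jacobiPoly, jacobiPoly, prod_Icc_succ_top (by omega), mul_assoc]

theorem eval_one_derivative_jacobiPoly (n : ℕ) :
    (derivative (jacobiPoly q n)).eval 1 = qPochhammer q n ^ 2 := by
  simp [jacobiPoly, derivative_mul, eval_prod, qPochhammer, sq, prod_mul_distrib]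

/-- The exponent `T (n - i)` for `i ≤ n` and `T (i - (n + 1))` for `n < i`: one of the two truncated
differences is `0`. -/
def jacobiExponent (n i : ℕ) : ℕ := triangle (n - i) + triangle (i - (n + 1))

theorem two_mul_jacobiExponent (n i : ℕ) :
    2 * (jacobiExponent n i : ℤ) = (n - i) * (n - i + 1) := by
  unfold jacobiExponent
  rcases le_or_gt i n with h | h
  · obtain ⟨d, rfl⟩ := Nat.exists_eq_add_of_le h
    have := two_mul_triangle d
    rw [Nat.add_sub_cancel_left, Nat.sub_eq_zero_of_le (by omega), triangle_zero, add_zero]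
    push_cast
    linear_combination (by exact_mod_cast this : (2 * triangle d : ℤ) = d * (d + 1))
  · obtain ⟨d, rfl⟩ := Nat.exists_eq_add_of_lt h
    have := two_mul_triangle d
    rw [Nat.sub_eq_zero_of_le (by omega), show n + d + 1 - (n + 1) = d by omega, triangle_zero,
      zero_add]
    push_cast
    linear_combination (by exact_mod_cast this : (2 * triangle d : ℤ) = d * (d + 1))

theorem jacobiExponent_succ_add (n i : ℕ) :
    jacobiExponent (n + 1) i + i = jacobiExponent n i + (n + 1) := by
  have h₁ := two_mul_jacobiExponent (n + 1) i
  have h₂ := two_mul_jacobiExponent n i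
  push_cast at h₁
  zify
  linarith

theorem jacobiExponent_succ_succ (n i : ℕ) :
    jacobiExponent (n + 1) (i + 1) = jacobiExponent n i := by
  simp [jacobiExponent]

theorem jacobiExponent_succ_add_two {n d : ℕ} (h : d ≤ 2 * n + 1) :
    jacobiExponent (n + 1) (d + 2) + (2 * n + 1 - d) = jacobiExponent n d + (n + 1) := by
  have h₁ := two_mul_jacobiExponent (n + 1) (d + 2)
  have h₂ := two_mul_jacobiExponent n d
  push_cast at h₁
  zify [h]
  linarith

def jacobiCoeff (n i : ℕ) : R :=
  (-1) ^ (n + 1 + i) * q ^ jacobiExponent n i * gaussBinom q (2 * n + 1) i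

theorem jacobiCoeff_succ_zero (n : ℕ) :
    jacobiCoeff q (n + 1) 0 = -q ^ (n + 1) * jacobiCoeff q n 0 := by
  have h := jacobiExponent_succ_add n 0
  rw [add_zero] at h
  simp only [jacobiCoeff, gaussBinom_zero_right, h, pow_add]
  ring

theorem jacobiCoeff_succ_one (n : ℕ) :
    jacobiCoeff q (n + 1) 1 =
      (1 + q ^ (2 * n + 2)) * jacobiCoeff q n 0 - q ^ (n + 1) * jacobiCoeff q n 1 := by
  have hB : gaussBinom q (2 * (n + 1) + 1) 1 =
      q * gaussBinom q (2 * n + 1) 1 + (1 + q ^ (2 * n + 2)) := by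
    rw [show 2 * (n + 1) + 1 = 2 * n + 1 + 1 + 1 by ring, gaussBinom_succ_succ,
      gaussBinom_succ_succ' q (2 * n + 1) 0]
    simp only [gaussBinom_zero_right, Nat.sub_zero]
    ring
  have hexp : q ^ jacobiExponent (n + 1) 1 * q = q ^ (n + 1) * q ^ jacobiExponent n 1 := by
    rw [← pow_succ, ← pow_add, jacobiExponent_succ_add, add_comm]
  have hexp' := jacobiExponent_succ_succ n 0
  simp only [zero_add] at hexp'
  simp only [jacobiCoeff, hB, gaussBinom_zero_right]
  rw [hexp'] at hexp ⊢
  linear_combination (-1) ^ (n + 1) * gaussBinom q (2 * n + 1) 1 * hexp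

theorem jacobiCoeff_succ_add_two (n d : ℕ) :
    jacobiCoeff q (n + 1) (d + 2) = (1 + q ^ (2 * n + 2)) * jacobiCoeff q n (d + 1) -
      q ^ (n + 1) * jacobiCoeff q n (d + 2) - q ^ (n + 1) * jacobiCoeff q n d := by
  have hB := gaussBinom_add_two_add_two q (2 * n + 1) d
  rw [show 2 * n + 1 + 2 = 2 * (n + 1) + 1 by ring, show 2 * n + 1 + 1 = 2 * n + 2 by ring] at hB
  have e₁ : q ^ jacobiExponent (n + 1) (d + 2) * q ^ (d + 2) =
      q ^ (n + 1) * q ^ jacobiExponent n (d + 2) := by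
    rw [← pow_add, ← pow_add, jacobiExponent_succ_add, add_comm]
  have e₂ : q ^ jacobiExponent (n + 1) (d + 2) * q ^ (2 * n + 1 - d) * gaussBinom q (2 * n + 1) d =
      q ^ (n + 1) * q ^ jacobiExponent n d * gaussBinom q (2 * n + 1) d := by
    rcases le_or_gt d (2 * n + 1) with h | h
    · rw [← pow_add, ← pow_add, jacobiExponent_succ_add_two h, add_comm]
    · simp [gaussBinom_eq_zero_of_lt q h]
  have e₀ : jacobiExponent (n + 1) (d + 2) = jacobiExponent n (d + 1) :=
    jacobiExponent_succ_succ n _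
  rw [e₀] at e₁ e₂
  simp only [jacobiCoeff, hB, e₀]
  linear_combination (-1) ^ (n + d) * gaussBinom q (2 * n + 1) (d + 2) * e₁ +
    (-1) ^ (n + d) * e₂

theorem coeff_jacobiPoly (n i : ℕ) : (jacobiPoly q n).coeff i = jacobiCoeff q n i := by
  induction n generalizing i with
  | zero =>
    rcases i with _ | _ | i
    · simp [jacobiPoly, jacobiCoeff, jacobiExponent, triangle]
    · simp [jacobiPoly, jacobiCoeff, jacobiExponent, triangle, coeff_X, coeff_one]
    · simp [jacobiPoly, jacobiCoeff, coeff_X, coeff_one,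
        gaussBinom_eq_zero_of_lt q (by omega : 1 < i + 2)]
  | succ n ih =>
    have h : jacobiPoly q n * ((1 - C (q ^ (n + 1)) * X) * (X - C (q ^ (n + 1)))) =
        C (1 + q ^ (2 * n + 2)) * (jacobiPoly q n * X) -
          C (q ^ (n + 1)) * (jacobiPoly q n * X ^ 2) - C (q ^ (n + 1)) * jacobiPoly q n := by
      simp only [map_add, map_one, map_pow]
      ring
    rw [jacobiPoly_succ, h]
    rcases i with _ | _ | d
    · simp only [coeff_sub, coeff_C_mul, coeff_mul_X_zero, coeff_mul_X_pow', ih,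
        jacobiCoeff_succ_zero]
      simp
    · rw [jacobiCoeff_succ_one]
      simp only [coeff_sub, coeff_C_mul, coeff_mul_X, coeff_mul_X_pow', ih]
      simp
    · rw [show d + 1 + 1 = d + 2 from rfl, jacobiCoeff_succ_add_two]
      simp only [coeff_sub, coeff_C_mul, coeff_mul_X, coeff_mul_X_pow', ih]
      simp only [le_add_iff_nonneg_left, zero_le, ↓reduceIte, add_tsub_cancel_right]
      ring

theorem natDegree_jacobiPoly_lt (n : ℕ) : (jacobiPoly q n).natDegree < 2 * n + 2 :=
  Nat.lt_succ_of_le <| natDegree_le_iff_coeff_eq_zero.mpr fun i hi => by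
    rw [coeff_jacobiPoly, jacobiCoeff, gaussBinom_eq_zero_of_lt q hi, mul_zero]

theorem jacobiCoeff_mul_add_jacobiCoeff_mul {n k : ℕ} (hk : k ≤ n) :
    jacobiCoeff q n (n - k) * (n - k : ℕ) + jacobiCoeff q n (n + 1 + k) * (n + 1 + k : ℕ) =
      (-1) ^ k * (2 * k + 1) * q ^ triangle k * gaussBinom q (2 * n + 1) (n - k) := by
  have h₁ : jacobiExponent n (n - k) = triangle k := by
    simp [jacobiExponent, Nat.sub_sub_self hk, Nat.sub_eq_zero_of_le (by omega : n - k ≤ n + 1),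
      triangle_zero]
  have h₂ : jacobiExponent n (n + 1 + k) = triangle k := by
    simp [jacobiExponent, Nat.sub_eq_zero_of_le (by omega : n ≤ n + 1 + k), triangle_zero]
  have hsymm : gaussBinom q (2 * n + 1) (n + 1 + k) = gaussBinom q (2 * n + 1) (n - k) := by
    rw [show 2 * n + 1 = n - k + (n + 1 + k) by omega, gaussBinom_symm_add]
  have hs₁ : (-1 : R) ^ (n + 1 + (n - k)) = -(-1) ^ k := by
    rw [show n + 1 + (n - k) = k + 2 * (n - k) + 1 by omega, pow_succ, pow_add, pow_mul]
    simp
  have hs₂ : (-1 : R) ^ (n + 1 + (n + 1 + k)) = (-1) ^ k := by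
    rw [show n + 1 + (n + 1 + k) = k + 2 * (n + 1) by omega, pow_add, pow_mul]
    simp
  simp only [jacobiCoeff, h₁, h₂, hsymm, hs₁, hs₂, Nat.cast_sub hk]
  push_cast
  ring

theorem qPochhammer_sq_eq_sum (n : ℕ) :
    qPochhammer q n ^ 2 = ∑ k ∈ range (n + 1),
      (-1) ^ k * (2 * k + 1) * q ^ triangle k * gaussBinom q (2 * n + 1) (n - k) := by
  rw [← eval_one_derivative_jacobiPoly,
    eval_one_derivative_eq_sum_range _ (natDegree_jacobiPoly_lt q n),
    show 2 * n + 2 = (n + 1) + (n + 1) by ring, sum_range_add, ← sum_range_reflect,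
    ← sum_add_distrib]
  refine sum_congr rfl fun k hk => ?_
  rw [Nat.add_sub_cancel, coeff_jacobiPoly, coeff_jacobiPoly,
    jacobiCoeff_mul_add_jacobiCoeff_mul q (Nat.lt_succ_iff.mp (mem_range.mp hk))]

end JacobiTripleProduct

section PowerSeries

open PowerSeries

theorem dvd_prod_one_sub_sub_one {R ι : Type*} [CommRing R] {s : Finset ι} {a : R} {f : ι → R}
    (h : ∀ i ∈ s, a ∣ f i) : a ∣ ∏ i ∈ s, (1 - f i) - 1 := by
  classical
  induction s using Finset.induction_on with
  | empty => simp
  | insert i s hi ih =>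
    rw [prod_insert hi]
    have := dvd_sub (ih fun j hj => h j (mem_insert_of_mem hj))
      (dvd_mul_of_dvd_left (h i (mem_insert_self i s)) (∏ j ∈ s, (1 - f j)))
    convert this using 1
    ring

variable {R : Type*} [CommRing R]

theorem isUnit_qPochhammer_X (n : ℕ) : IsUnit (qPochhammer (X : R⟦X⟧) n) := by
  simp only [isUnit_iff_constantCoeff, qPochhammer, map_sub, constantCoeff_one, map_pow,
    constantCoeff_X, IsUnit.prod_iff, mem_Icc, and_imp]
  intro j hj _
  simp [zero_pow (by omega : j ≠ 0)]

theorem X_pow_dvd_gaussBinom_mul_qPochhammer_sub_one {r s a : ℕ} (hra : r ≤ a) (hrs : r ≤ s) :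
    (X : R⟦X⟧) ^ (r + 1) ∣ gaussBinom X (r + s) r * qPochhammer X a - 1 := by
  set U := ∏ j ∈ Ioc r a, (1 - (X : R⟦X⟧) ^ j)
  set V := ∏ j ∈ Ioc s (r + s), (1 - (X : R⟦X⟧) ^ j)
  have hU : X ^ (r + 1) ∣ U - 1 :=
    dvd_prod_one_sub_sub_one fun j hj => pow_dvd_pow X (mem_Ioc.mp hj).1
  have hV : X ^ (r + 1) ∣ V - 1 :=
    dvd_prod_one_sub_sub_one fun j hj => pow_dvd_pow X (by have := (mem_Ioc.mp hj).1; omega)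
  have key : gaussBinom X (r + s) r * qPochhammer X a = V * U := by
    apply (isUnit_qPochhammer_X s).mul_left_cancel
    calc qPochhammer X s * (gaussBinom X (r + s) r * qPochhammer X a)
        = gaussBinom X (r + s) r * qPochhammer X r * qPochhammer X s * U := by
          rw [qPochhammer_eq_mul_prod_Ioc X hra]; ring
      _ = qPochhammer X s * (V * U) := by
          rw [gaussBinom_mul_qPochhammer, qPochhammer_eq_mul_prod_Ioc X (Nat.le_add_left s r)]; ring
  rw [key]
  convert dvd_add (dvd_mul_of_dvd_left hV U) hU using 1
  ring

theorem coeff_qPochhammer_X_pow_three {M n : ℕ} (h : M ≤ n) :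
    coeff M (qPochhammer (X : ℤ⟦X⟧) n ^ 3) = eulerCubeCoeff M := by
  set E := qPochhammer (X : ℤ⟦X⟧) n
  let w : ℕ → ℤ := fun k => (-1) ^ k * (2 * k + 1)
  have hcube : E ^ 3 = ∑ k ∈ range (n + 1),
      C (w k) * X ^ triangle k * (gaussBinom X (2 * n + 1) (n - k) * E) := by
    rw [pow_succ, qPochhammer_sq_eq_sum, sum_mul]
    refine sum_congr rfl fun k _ => ?_
    simp only [w, map_mul, map_pow, map_neg, map_one, map_add, map_natCast, map_ofNat]
    ring
  have hdvd : X ^ (n + 1) ∣ E ^ 3 - ∑ k ∈ range (n + 1), C (w k) * X ^ triangle k := by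
    rw [hcube, ← sum_sub_distrib]
    refine dvd_sum fun k hk => ?_
    have hk := Nat.lt_succ_iff.mp (mem_range.mp hk)
    have hB := X_pow_dvd_gaussBinom_mul_qPochhammer_sub_one (R := ℤ) (s := n + 1 + k)
      (Nat.sub_le n k) (by omega)
    rw [show n - k + (n + 1 + k) = 2 * n + 1 by omega] at hB
    have hX : (X : ℤ⟦X⟧) ^ (n + 1) ∣ X ^ triangle k * X ^ (n - k + 1) := by
      rw [← pow_add]; exact pow_dvd_pow X (by have := le_triangle k; omega)
    convert dvd_mul_of_dvd_left (hX.trans (mul_dvd_mul_left _ hB)) (C (w k)) using 1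
    ring
  have hcoeff := X_pow_dvd_iff.mp hdvd M (Nat.lt_succ_of_le h)
  rw [map_sub, sub_eq_zero, map_sum] at hcoeff
  simp only [hcoeff, coeff_C_mul_X_pow, eulerCubeCoeff_eq_sum_range h, eq_comm, w]

theorem prod_Icc_eq_qPochhammer_cube_mul_expand (N : ℕ) :
    ∏ k ∈ Icc 1 N, ((1 - X ^ k) ^ 3 * (1 - X ^ (7 * k)) ^ 3) =
      qPochhammer (X : R⟦X⟧) N ^ 3 * expand 7 (by norm_num) (qPochhammer X N ^ 3) := by
  simp [qPochhammer, prod_mul_distrib, prod_pow, map_prod, pow_mul]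

theorem coeff_qPochhammer_cube_mul_expand {n N : ℕ} (h : n ≤ N) :
    coeff n (qPochhammer (X : ℤ⟦X⟧) N ^ 3 * expand 7 (by norm_num) (qPochhammer X N ^ 3)) =
      etaProductCoeff n := by
  rw [coeff_mul]
  refine sum_congr rfl fun x hx => ?_
  have hx' := mem_antidiagonal.mp hx
  rw [coeff_qPochhammer_X_pow_three (by omega), coeff_expand]
  split_ifs
  · rw [coeff_qPochhammer_X_pow_three (by omega)]
  · rfl

end PowerSeries

/-- Ramanujan type congruence for `η(τ)³η(7τ)³`: `a(7ᵏn) ≡ 0 (mod 7ᵏ)`. -/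
theorem eta3_eta7_3_congruence (a : ℕ → ℤ)
    (ha : ∀ n N : ℕ, n ≤ N →
      a n = (PowerSeries.coeff (R := ℤ) n)
        (PowerSeries.X *
          ∏ k ∈ Finset.Icc 1 N,
            ((1 - PowerSeries.X ^ k) ^ 3 * (1 - PowerSeries.X ^ (7 * k)) ^ 3))) :
    ∀ k n : ℕ, 1 ≤ n → ((7 : ℤ) ^ k) ∣ a (7 ^ k * n) := by
  have h_coeff : ∀ n, a (n + 1) = etaProductCoeff n := fun n => by
    rw [ha (n + 1) (n + 1) le_rfl, PowerSeries.coeff_succ_X_mul,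
      prod_Icc_eq_qPochhammer_cube_mul_expand, coeff_qPochhammer_cube_mul_expand (by omega)]
  have h_rec : ∀ m, 0 < m → a (7 * m) = -7 * a m := by
    rintro (_ | m) hm
    · omega
    · rw [show 7 * (m + 1) = 7 * m + 6 + 1 by ring, h_coeff, h_coeff,
        etaProductCoeff_seven_mul_add_six]
  intro k n hn
  rw [apply_pow_mul_of_apply_mul a (by norm_num) h_rec k hn]
  exact (pow_dvd_pow_of_dvd (by norm_num) k).mul_right _
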